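/- Assume Q has full column rank s, and let Φ : ℝ^{s×s} → ℝ be Loewner-isotone on positive semidefinite matrices (A ⪯ B implies Φ(A) ≤ Φ(B)). Suppose ξ* is a Φ-optimal design in the model with nuisance effects: ξ* is feasible and Φ((Kᵀ G* K)⁻¹) ≥ Φ((Kᵀ G K)⁻¹) for every feasible design ξ, every generalized inverse G* of M(ξ*) and every generalized inverse G of M(ξ). Then the treatment proportions design w* = w_{ξ*} satisfies w*_u > 0 for all u and is Φ-optimal in the marginal model without nuisance effects: Φ(N_Q(w*)) ≥ Φ(N_Q(w)) for every w ∈ ℝ^v with all w_u > 0 and Σ_u w_u = 1. -/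

import Mathlib

open Matrix Finset

noncomputable section

/-- An approximate design on `v` treatments and `n` nuisance conditions:
nonnegative weights summing to one. -/
def IsDesign {v n : ℕ} (ξ : Fin v → Fin n → ℝ) : Prop :=
  (∀ u t, 0 ≤ ξ u t) ∧ ∑ u, ∑ t, ξ u t = 1

/-- The treatment proportions design of `ξ`: `(w_ξ)_u = ∑_t ξ(u,t)`. -/
def tpd {v n : ℕ} (ξ : Fin v → Fin n → ℝ) : Fin v → ℝ :=
  fun u => ∑ t, ξ u t

/-- The regression vector `f(u,t) = (e_uᵀ, h(t)ᵀ)ᵀ`. -/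
def regvec {v n : ℕ} {ι : Type*} (h : Fin n → ι → ℝ) (u : Fin v) (t : Fin n) :
    Fin v ⊕ ι → ℝ :=
  Sum.elim (fun i => if i = u then 1 else 0) (h t)

/-- The moment matrix `M(ξ) = ∑_{u,t} ξ(u,t) f(u,t) f(u,t)ᵀ`. -/
def momM {v n : ℕ} {ι : Type*} [Fintype ι] (h : Fin n → ι → ℝ)
    (ξ : Fin v → Fin n → ℝ) : Matrix (Fin v ⊕ ι) (Fin v ⊕ ι) ℝ :=
  ∑ u, ∑ t, ξ u t • vecMulVec (regvec h u t) (regvec h u t)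

/-- The matrix `K = (Qᵀ, 0)ᵀ`. -/
def Kmat {v s : ℕ} (ι : Type*) (Q : Matrix (Fin v) (Fin s) ℝ) :
    Matrix (Fin v ⊕ ι) (Fin s) ℝ :=
  Matrix.of fun i j => Sum.elim (fun a => Q a j) (fun _ => 0) i

/-- Feasibility of a design: the column space of `K` is contained in the
column space of `M(ξ)`. -/
def Feasible {v n s : ℕ} {ι : Type*} [Fintype ι] (h : Fin n → ι → ℝ)
    (Q : Matrix (Fin v) (Fin s) ℝ) (ξ : Fin v → Fin n → ℝ) : Prop :=
  LinearMap.range (Kmat ι Q).mulVecLin ≤ LinearMap.range (momM h ξ).mulVecLin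

/-- `G` is a generalized inverse of `M`. -/
def IsGInv {ι : Type*} [Fintype ι] (M G : Matrix ι ι ℝ) : Prop :=
  M * G * M = M

/-- Information matrix `N_Q(w) = (Qᵀ diag(w)⁻¹ Q)⁻¹` of a treatment
proportions design in the marginal model. -/
def NQ {v s : ℕ} (Q : Matrix (Fin v) (Fin s) ℝ) (w : Fin v → ℝ) :
    Matrix (Fin s) (Fin s) ℝ :=
  (Qᵀ * diagonal (fun u => (w u)⁻¹) * Q)⁻¹

/-- The matrix `H_ξ` whose `u`-th column is `(1/w_u) ∑_t ξ(u,t) h(t)`. -/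
def Hmat {v n : ℕ} {ι : Type*} (h : Fin n → ι → ℝ) (ξ : Fin v → Fin n → ℝ) :
    Matrix ι (Fin v) ℝ :=
  Matrix.of fun i u => (tpd ξ u)⁻¹ * ∑ t, ξ u t * h t i

/-- `ξ` is resistant to nuisance effects for the contrasts `Q`. -/
def NuisanceResistant {v n s : ℕ} {ι : Type*} (h : Fin n → ι → ℝ)
    (Q : Matrix (Fin v) (Fin s) ℝ) (ξ : Fin v → Fin n → ℝ) : Prop :=
  Hmat h ξ * Q = 0

/-- `ξ` is balanced: all columns of `H_ξ` coincide. -/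
def BalancedDesign {v n : ℕ} {ι : Type*} (h : Fin n → ι → ℝ)
    (ξ : Fin v → Fin n → ℝ) : Prop :=
  ∀ u u' : Fin v, (fun i => Hmat h ξ i u) = (fun i => Hmat h ξ i u')

/-!
Every moment matrix has upper-left block `diag(w_ξ)`. Writing `K = M(ξ) R` (feasibility), the
Gauss–Markov inequality `(RᵀMR)⁻¹ ⪯ LMLᵀ` for `LMR = I`, applied with
`L = (N_Q(w_ξ) Qᵀ diag(w_ξ)⁻¹, 0)`, bounds the information `(KᵀGK)⁻¹ = (RᵀMR)⁻¹` of `ξ` by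
`N_Q(w_ξ)`. Conversely, for a product design `w ⊗ p` the off-diagonal block of the moment matrix is
a rank-one matrix `c wᵀ`, which `Qᵀ1 = 0` annihilates, so its information is exactly `N_Q(w)`.
Taking for `p` the nuisance marginal of `ξ*` and using that `Φ` is isotone gives the optimality of
`w*`; and `w*` is positive because a treatment without mass would, by feasibility, force the
corresponding row of `Q` to vanish.
-/

open scoped MatrixOrder

namespace Matrix

section LinearAlgebra

variable {m n p K : Type*} [Fintype n] [Field K]

theorem exists_mul_mul_self_eq [Fintype m] [DecidableEq m] [DecidableEq n] (M : Matrix m n K) :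
    ∃ G : Matrix n m K, M * G * M = M := by
  set f := toLin' M
  obtain ⟨g, hg⟩ := f.rangeRestrict.exists_rightInverse_of_surjective f.range_rangeRestrict
  obtain ⟨q, hq⟩ := (LinearMap.range f).subtype.exists_leftInverse_of_injective
    (Submodule.ker_subtype _)
  refine ⟨LinearMap.toMatrix' (g ∘ₗ q), toLin'.injective <| LinearMap.ext fun x => ?_⟩
  have hqf : q (f x) = f.rangeRestrict x := LinearMap.congr_fun hq (f.rangeRestrict x)
  have hgf : f (g (f.rangeRestrict x)) = f x :=
    congrArg Subtype.val (LinearMap.congr_fun hg (f.rangeRestrict x))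
  rw [toLin'_mul, toLin'_mul, toLin'_toMatrix']
  simp only [LinearMap.comp_apply]
  rw [hqf, hgf]

theorem exists_mul_eq_of_range_mulVecLin_le [Fintype p] [DecidableEq n] [DecidableEq p]
    {M : Matrix m n K} {A : Matrix m p K}
    (h : LinearMap.range A.mulVecLin ≤ LinearMap.range M.mulVecLin) :
    ∃ R : Matrix n p K, M * R = A := by
  obtain ⟨g, hg⟩ := Module.projective_lifting_property M.mulVecLin.rangeRestrict
    (A.mulVecLin.codRestrict _ fun x => h ⟨x, rfl⟩)
    (LinearMap.range_eq_top.1 M.mulVecLin.range_rangeRestrict)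
  refine ⟨LinearMap.toMatrix' g, toLin'.injective <| LinearMap.ext fun x => ?_⟩
  rw [toLin'_mul, toLin'_toMatrix']
  exact congrArg Subtype.val (LinearMap.congr_fun hg x)

theorem mulVec_injective_of_rank_eq (Q : Matrix m n K) (hQ : Q.rank = Fintype.card n) :
    Function.Injective Q.mulVec := by
  have hker : Module.finrank K (LinearMap.ker Q.mulVecLin) = 0 := by
    have := Q.mulVecLin.finrank_range_add_finrank_ker
    rw [Module.finrank_fintype_fun_eq_card, ← rank, hQ] at this
    omega
  exact LinearMap.ker_eq_bot.mp (Submodule.finrank_eq_zero.mp hker)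

end LinearAlgebra

theorem transpose_mul_mul_eq_of_mul_eq {m s R : Type*} [Fintype m] [CommSemiring R]
    {M G : Matrix m m R} {A X : Matrix m s R} (hMsymm : Mᵀ = M) (hMX : M * X = A)
    (hG : M * G * M = M) : Aᵀ * G * A = Xᵀ * M * X := by
  rw [← hMX, transpose_mul, hMsymm]
  calc Xᵀ * M * G * (M * X) = Xᵀ * (M * G * M) * X := by simp only [Matrix.mul_assoc]
    _ = Xᵀ * M * X := by rw [hG, Matrix.mul_assoc]

section GaussMarkov

variable {m s : Type*} [Fintype m] [Fintype s] [DecidableEq s]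
  {M : Matrix m m ℝ} {L : Matrix s m ℝ} {R : Matrix m s ℝ}

theorem PosSemidef.posDef_transpose_mul_mul (hM : M.PosSemidef) (hLMR : L * M * R = 1) :
    (Rᵀ * M * R).PosDef := by
  have hpsd : (Rᵀ * M * R).PosSemidef := by simpa using hM.conjTranspose_mul_mul_same R
  rw [hpsd.posDef_iff_isUnit, ← mulVec_injective_iff_isUnit]
  refine (injective_iff_map_eq_zero (Rᵀ * M * R).mulVecLin).2 fun x hx => ?_
  have hquad : star (R *ᵥ x) ⬝ᵥ M *ᵥ (R *ᵥ x) = 0 := by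
    have : star x ⬝ᵥ (Rᵀ * M * R) *ᵥ x = 0 := by
      rw [show (Rᵀ * M * R) *ᵥ x = 0 from hx, dotProduct_zero]
    simpa [← mulVec_mulVec, dotProduct_mulVec, vecMul_transpose] using this
  have hMRx : M *ᵥ (R *ᵥ x) = 0 := (hM.dotProduct_mulVec_zero_iff _).1 hquad
  rw [← one_mulVec x, ← hLMR, ← mulVec_mulVec, ← mulVec_mulVec, hMRx, mulVec_zero]

theorem PosSemidef.inv_transpose_mul_mul_le (hM : M.PosSemidef) (hLMR : L * M * R = 1) :
    (Rᵀ * M * R)⁻¹ ≤ L * M * Lᵀ := by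
  have hB : (Rᵀ * M * R).PosDef := hM.posDef_transpose_mul_mul hLMR
  set B := Rᵀ * M * R with hBdef
  have hMsymm : Mᵀ = M := by simpa using hM.1.eq
  have hBinvsymm : B⁻¹ᵀ = B⁻¹ := by simpa using hB.1.inv.eq
  have hBB : B * B⁻¹ = 1 := mul_nonsing_inv B ((isUnit_iff_isUnit_det B).1 hB.isUnit)
  have hRML : Rᵀ * M * Lᵀ = 1 := by
    simpa [Matrix.mul_assoc, hMsymm] using congrArg (·ᵀ) hLMR
  have hsq : (L - B⁻¹ * Rᵀ) * M * (L - B⁻¹ * Rᵀ)ᵀ = L * M * Lᵀ - B⁻¹ := by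
    have e₁ : L * M * (R * B⁻¹) = B⁻¹ := by rw [← Matrix.mul_assoc, hLMR, Matrix.one_mul]
    have e₂ : B⁻¹ * Rᵀ * M * Lᵀ = B⁻¹ := by
      rw [Matrix.mul_assoc, Matrix.mul_assoc, ← Matrix.mul_assoc Rᵀ, hRML, Matrix.mul_one]
    have e₃ : B⁻¹ * Rᵀ * M * (R * B⁻¹) = B⁻¹ := by
      rw [← Matrix.mul_assoc, Matrix.mul_assoc B⁻¹, Matrix.mul_assoc B⁻¹, ← hBdef,
        Matrix.mul_assoc, hBB, Matrix.mul_one]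
    rw [transpose_sub, transpose_mul, transpose_transpose, hBinvsymm, Matrix.sub_mul,
      Matrix.sub_mul, Matrix.mul_sub, Matrix.mul_sub, e₁, e₂, e₃, sub_self, sub_zero]
  rw [le_iff, ← hsq]
  simpa using hM.mul_mul_conjTranspose_same (L - B⁻¹ * Rᵀ)

end GaussMarkov

section Blocks

variable {α ι s : Type*} [Fintype α] [Fintype ι] [DecidableEq α]
  {M : Matrix (α ⊕ ι) (α ⊕ ι) ℝ} {w : α → ℝ} {Q : Matrix α s ℝ}

theorem PosSemidef.inv_transpose_mul_mul_le_of_toBlocks₁₁ [Fintype s] [DecidableEq s]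
    (hM : M.PosSemidef) (hw : ∀ u, 0 < w u) (hM₁₁ : M.toBlocks₁₁ = diagonal w)
    (hQ : Function.Injective Q.mulVec)
    {R : Matrix (α ⊕ ι) s ℝ} (hMR : M * R = fromRows Q (0 : Matrix ι s ℝ)) :
    (Rᵀ * M * R)⁻¹ ≤ (Qᵀ * diagonal (fun u => (w u)⁻¹) * Q)⁻¹ := by
  set D := diagonal (fun u => (w u)⁻¹)
  set X := Qᵀ * D * Q with hXdef
  have hX : X.PosDef := by
    simpa [X] using (posDef_diagonal_iff.2 fun u => inv_pos.2 (hw u)).conjTranspose_mul_mul_same hQ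
  have hXX : X⁻¹ * X = 1 := nonsing_inv_mul X ((isUnit_iff_isUnit_det X).1 hX.isUnit)
  have hXinvsymm : X⁻¹ᵀ = X⁻¹ := by simpa using hX.1.inv.eq
  have hwD : diagonal w * D = 1 := by
    simp [D, diagonal_mul_diagonal, fun u => mul_inv_cancel₀ (hw u).ne']
  set A := X⁻¹ * Qᵀ * D
  have hLMR : fromCols A (0 : Matrix s ι ℝ) * M * R = 1 := by
    rw [Matrix.mul_assoc, hMR, fromCols_mul_fromRows, Matrix.zero_mul, add_zero, ← hXX]
    simp only [A, X, Matrix.mul_assoc]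
  have hLML : fromCols A (0 : Matrix s ι ℝ) * M * (fromCols A (0 : Matrix s ι ℝ))ᵀ = X⁻¹ := by
    rw [← fromBlocks_toBlocks M, hM₁₁, fromCols_mul_fromBlocks, transpose_fromCols,
      fromCols_mul_fromRows]
    simp only [Matrix.zero_mul, add_zero, transpose_zero, Matrix.mul_zero]
    have hAt : Aᵀ = D * (Q * X⁻¹) := by
      simp only [A, D, transpose_mul, hXinvsymm, diagonal_transpose, transpose_transpose,
        Matrix.mul_assoc]
    calc A * diagonal w * Aᵀ = X⁻¹ * Qᵀ * (D * (diagonal w * D)) * Q * X⁻¹ := by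
          rw [hAt]; simp only [A, Matrix.mul_assoc]
      _ = X⁻¹ * X * X⁻¹ := by rw [hwD, Matrix.mul_one]; simp only [hXdef, Matrix.mul_assoc]
      _ = X⁻¹ := by rw [hXX, Matrix.one_mul]
  simpa [hLML] using hM.inv_transpose_mul_mul_le hLMR

theorem mul_fromRows_eq_fromRows_of_toBlocks (hw : ∀ u, w u ≠ 0)
    (hM₁₁ : M.toBlocks₁₁ = diagonal w) {c : ι → ℝ} (hM₂₁ : M.toBlocks₂₁ = vecMulVec c w)
    (hQ : ∀ j, ∑ i, Q i j = 0) :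
    M * fromRows (diagonal (fun u => (w u)⁻¹) * Q) (0 : Matrix ι s ℝ) =
      fromRows Q (0 : Matrix ι s ℝ) := by
  rw [← fromBlocks_toBlocks M, fromBlocks_mul_fromRows, hM₁₁, hM₂₁]
  congr 1
  · simp [← Matrix.mul_assoc, diagonal_mul_diagonal, fun u => mul_inv_cancel₀ (hw u)]
  · ext i j
    rw [Matrix.mul_zero, add_zero, zero_apply, mul_apply]
    simp only [vecMulVec_apply, diagonal_mul]
    calc ∑ u, c i * w u * ((w u)⁻¹ * Q u j) = c i * ∑ u, Q u j := by
          rw [mul_sum]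
          exact sum_congr rfl fun u _ => by field_simp [hw u]
      _ = 0 := by rw [hQ, mul_zero]

end Blocks

end Matrix

section Design

variable {v n s : ℕ} {ι : Type*}

theorem Kmat_eq_fromRows (Q : Matrix (Fin v) (Fin s) ℝ) :
    Kmat ι Q = fromRows Q (0 : Matrix ι (Fin s) ℝ) := by
  ext (a | i) j <;> rfl

variable [Fintype ι] (h : Fin n → ι → ℝ)

theorem momM_inl_apply (ξ : Fin v → Fin n → ℝ) (u : Fin v) (y : Fin v ⊕ ι) :
    momM h ξ (Sum.inl u) y = ∑ t, ξ u t * regvec h u t y := by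
  simp [momM, Matrix.sum_apply, vecMulVec_apply, regvec]

theorem transpose_momM (ξ : Fin v → Fin n → ℝ) : (momM h ξ)ᵀ = momM h ξ := by
  simp [momM, transpose_sum, transpose_smul, transpose_vecMulVec]

theorem posSemidef_momM {ξ : Fin v → Fin n → ℝ} (hξ : ∀ u t, 0 ≤ ξ u t) :
    (momM h ξ).PosSemidef :=
  posSemidef_sum _ fun u _ => posSemidef_sum _ fun t _ => by
    simpa using (posSemidef_vecMulVec_self_star (regvec h u t)).smul (hξ u t)

theorem toBlocks₁₁_momM (ξ : Fin v → Fin n → ℝ) : (momM h ξ).toBlocks₁₁ = diagonal (tpd ξ) := by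
  ext a b
  simp [toBlocks₁₁, momM_inl_apply, regvec, diagonal_apply, tpd, eq_comm]

theorem toBlocks₂₁_momM (ξ : Fin v → Fin n → ℝ) :
    (momM h ξ).toBlocks₂₁ = of fun i u => ∑ t, ξ u t * h t i := by
  ext i u
  rw [toBlocks₂₁, of_apply, ← transpose_apply (momM h ξ), transpose_momM, momM_inl_apply]
  simp [regvec]

theorem feasible_of_mul_eq {Q : Matrix (Fin v) (Fin s) ℝ} {ξ : Fin v → Fin n → ℝ}
    {R : Matrix (Fin v ⊕ ι) (Fin s) ℝ} (hMR : momM h ξ * R = Kmat ι Q) : Feasible h Q ξ := by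
  rintro _ ⟨x, rfl⟩
  exact ⟨R *ᵥ x, by simp [← hMR]⟩

theorem tpd_pos_of_feasible [DecidableEq ι] {Q : Matrix (Fin v) (Fin s) ℝ}
    (hQrow : ∀ i, ∃ j, Q i j ≠ 0) {ξ : Fin v → Fin n → ℝ} (hξ : ∀ u t, 0 ≤ ξ u t)
    (hfeas : Feasible h Q ξ) (u : Fin v) : 0 < tpd ξ u := by
  obtain ⟨j, hj⟩ := hQrow u
  obtain ⟨R, hR⟩ := exists_mul_eq_of_range_mulVecLin_le hfeas
  refine (sum_nonneg fun t _ => hξ u t).lt_of_ne fun h0 => hj ?_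
  have hξu : ∀ t, ξ u t = 0 := fun t =>
    (sum_eq_zero_iff_of_nonneg fun t _ => hξ u t).1 h0.symm t (mem_univ t)
  have := congrFun (congrFun hR (Sum.inl u)) j
  simpa [Kmat, mul_apply, momM_inl_apply, hξu] using this.symm

theorem information_mem_Icc [DecidableEq ι] {Q : Matrix (Fin v) (Fin s) ℝ}
    (hQ : Function.Injective Q.mulVec) {ξ : Fin v → Fin n → ℝ} (hξ : ∀ u t, 0 ≤ ξ u t)
    (hfeas : Feasible h Q ξ) (hpos : ∀ u, 0 < tpd ξ u) {G : Matrix (Fin v ⊕ ι) (Fin v ⊕ ι) ℝ}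
    (hG : IsGInv (momM h ξ) G) :
    ((Kmat ι Q)ᵀ * G * Kmat ι Q)⁻¹ ∈ Set.Icc 0 (NQ Q (tpd ξ)) := by
  obtain ⟨R, hMR⟩ := exists_mul_eq_of_range_mulVecLin_le hfeas
  rw [transpose_mul_mul_eq_of_mul_eq (transpose_momM h ξ) hMR hG]
  refine ⟨((posSemidef_momM h hξ).conjTranspose_mul_mul_same R).inv.nonneg, ?_⟩
  exact (posSemidef_momM h hξ).inv_transpose_mul_mul_le_of_toBlocks₁₁ hpos (toBlocks₁₁_momM h ξ)
    hQ (hMR.trans (Kmat_eq_fromRows Q))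

def productDesign (w : Fin v → ℝ) (p : Fin n → ℝ) : Fin v → Fin n → ℝ :=
  fun u t => w u * p t

theorem isDesign_productDesign {w : Fin v → ℝ} {p : Fin n → ℝ} (hw : ∀ u, 0 ≤ w u)
    (hw₁ : ∑ u, w u = 1) (hp : ∀ t, 0 ≤ p t) (hp₁ : ∑ t, p t = 1) :
    IsDesign (productDesign w p) :=
  ⟨fun u t => mul_nonneg (hw u) (hp t), by simp [productDesign, ← mul_sum, hw₁, hp₁]⟩

theorem tpd_productDesign (w : Fin v → ℝ) {p : Fin n → ℝ} (hp₁ : ∑ t, p t = 1) :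
    tpd (productDesign w p) = w := by
  ext u
  simp [tpd, productDesign, ← mul_sum, hp₁]

theorem momM_productDesign_mul {Q : Matrix (Fin v) (Fin s) ℝ} (hQc : ∀ j, ∑ i, Q i j = 0)
    {w : Fin v → ℝ} (hw : ∀ u, w u ≠ 0) {p : Fin n → ℝ} (hp₁ : ∑ t, p t = 1) :
    momM h (productDesign w p) * fromRows (diagonal (fun u => (w u)⁻¹) * Q)
      (0 : Matrix ι (Fin s) ℝ) = Kmat ι Q := by
  rw [Kmat_eq_fromRows]
  refine mul_fromRows_eq_fromRows_of_toBlocks hw ?_ (c := fun i => ∑ t, p t * h t i) ?_ hQc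
  · rw [toBlocks₁₁_momM, tpd_productDesign w hp₁]
  · ext i u
    simp only [toBlocks₂₁_momM, productDesign, of_apply, vecMulVec_apply, sum_mul]
    exact sum_congr rfl fun t _ => by ring

theorem Kmat_transpose_mul_mul_productDesign {Q : Matrix (Fin v) (Fin s) ℝ}
    (hQc : ∀ j, ∑ i, Q i j = 0) {w : Fin v → ℝ} (hw : ∀ u, w u ≠ 0) {p : Fin n → ℝ}
    (hp₁ : ∑ t, p t = 1)
    {G : Matrix (Fin v ⊕ ι) (Fin v ⊕ ι) ℝ} (hG : IsGInv (momM h (productDesign w p)) G) :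
    (Kmat ι Q)ᵀ * G * Kmat ι Q = Qᵀ * diagonal (fun u => (w u)⁻¹) * Q := by
  have hMR := momM_productDesign_mul h hQc hw hp₁
  rw [transpose_mul_mul_eq_of_mul_eq (transpose_momM h _) hMR hG, Matrix.mul_assoc, hMR,
    Kmat_eq_fromRows, transpose_fromRows, fromCols_mul_fromRows]
  simp [transpose_mul, Matrix.mul_assoc]

end Design

theorem stmt7_general {v n d s : ℕ}
    (h : Fin n → Fin d → ℝ) (Q : Matrix (Fin v) (Fin s) ℝ)
    (hQc : ∀ j, ∑ i, Q i j = 0) (hQrow : ∀ i, ∃ j, Q i j ≠ 0)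
    (hQrank : Q.rank = s)
    (Φ : Matrix (Fin s) (Fin s) ℝ → ℝ)
    (hiso : ∀ A B : Matrix (Fin s) (Fin s) ℝ,
      A.PosSemidef → B.PosSemidef → (B - A).PosSemidef → Φ A ≤ Φ B)
    (ξs : Fin v → Fin n → ℝ) (hξs : IsDesign ξs) (hfeas : Feasible h Q ξs)
    (hopt : ∀ ξ, IsDesign ξ → Feasible h Q ξ →
      ∀ Gs, IsGInv (momM h ξs) Gs → ∀ G, IsGInv (momM h ξ) G →
        Φ (((Kmat (Fin d) Q)ᵀ * G * Kmat (Fin d) Q)⁻¹) ≤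
          Φ (((Kmat (Fin d) Q)ᵀ * Gs * Kmat (Fin d) Q)⁻¹)) :
    (∀ u, 0 < tpd ξs u) ∧
    (∀ w : Fin v → ℝ, (∀ u, 0 < w u) → ∑ u, w u = 1 →
      Φ (NQ Q w) ≤ Φ (NQ Q (tpd ξs))) := by
  obtain ⟨hξ, hξ₁⟩ := hξs
  have hpos : ∀ u, 0 < tpd ξs u := tpd_pos_of_feasible h hQrow hξ hfeas
  refine ⟨hpos, fun w hw hw₁ => ?_⟩
  have hQ : Function.Injective Q.mulVec := Q.mulVec_injective_of_rank_eq (by simpa using hQrank)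
  have hw₀ : ∀ u, w u ≠ 0 := fun u => (hw u).ne'
  set p : Fin n → ℝ := fun t => ∑ u, ξs u t
  have hp₁ : ∑ t, p t = 1 := by rw [← hξ₁, sum_comm]
  have hdesign : IsDesign (productDesign w p) :=
    isDesign_productDesign (fun u => (hw u).le) hw₁ (fun t => sum_nonneg fun u _ => hξ u t) hp₁
  obtain ⟨Gs, hGs⟩ := exists_mul_mul_self_eq (momM h ξs)
  obtain ⟨G, hG⟩ := exists_mul_mul_self_eq (momM h (productDesign w p))
  obtain ⟨hnonneg, hle⟩ := information_mem_Icc h hQ hξ hfeas hpos hGs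
  calc Φ (NQ Q w) = Φ (((Kmat (Fin d) Q)ᵀ * G * Kmat (Fin d) Q)⁻¹) := by
        rw [Kmat_transpose_mul_mul_productDesign h hQc hw₀ hp₁ hG, NQ]
    _ ≤ Φ (((Kmat (Fin d) Q)ᵀ * Gs * Kmat (Fin d) Q)⁻¹) :=
        hopt _ hdesign (feasible_of_mul_eq h (momM_productDesign_mul h hQc hw₀ hp₁)) Gs hGs G hG
    _ ≤ Φ (NQ Q (tpd ξs)) := hiso _ _ hnonneg.posSemidef (hnonneg.trans hle).posSemidef hle

/-- If ξ* is Φ-optimal in the model with nuisance effects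
(Φ Loewner-isotone), then its treatment proportions design w* has all
weights positive and is Φ-optimal in the marginal model without nuisance
effects. -/
theorem stmt7 {v n d s : ℕ} (hv : 2 ≤ v)
    (h : Fin n → Fin d → ℝ) (Q : Matrix (Fin v) (Fin s) ℝ)
    (hQc : ∀ j, ∑ i, Q i j = 0) (hQrow : ∀ i, ∃ j, Q i j ≠ 0)
    (hQrank : Q.rank = s)
    (Φ : Matrix (Fin s) (Fin s) ℝ → ℝ)
    (hiso : ∀ A B : Matrix (Fin s) (Fin s) ℝ,
      A.PosSemidef → B.PosSemidef → (B - A).PosSemidef → Φ A ≤ Φ B)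
    (ξs : Fin v → Fin n → ℝ) (hξs : IsDesign ξs) (hfeas : Feasible h Q ξs)
    (hopt : ∀ ξ, IsDesign ξ → Feasible h Q ξ →
      ∀ Gs, IsGInv (momM h ξs) Gs → ∀ G, IsGInv (momM h ξ) G →
        Φ (((Kmat (Fin d) Q)ᵀ * G * Kmat (Fin d) Q)⁻¹) ≤
          Φ (((Kmat (Fin d) Q)ᵀ * Gs * Kmat (Fin d) Q)⁻¹)) :
    (∀ u, 0 < tpd ξs u) ∧
    (∀ w : Fin v → ℝ, (∀ u, 0 < w u) → ∑ u, w u = 1 →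
      Φ (NQ Q w) ≤ Φ (NQ Q (tpd ξs))) :=
  stmt7_general h Q hQc hQrow hQrank Φ hiso ξs hξs hfeas hopt
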